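/- Let I be a proper ideal of R = C^∞(M,ℝ) of finite codimension. Then dim_ℝ(R/I) = Σ_{y ∈ spec(I)} dim_ℝ(R/(I + 𝔫_y)), the sum ranging over the (finitely many) points of the spectrum of I. -/

import Mathlib

open scoped Manifold
open Module Filter Topology

noncomputable section

/-- The ℝ-algebra of smooth real-valued functions on a manifold `M` modelled on `ℝ^m`. -/
abbrev SmoothFns (m : ℕ) (M : Type*) [TopologicalSpace M]
    [ChartedSpace (EuclideanSpace ℝ (Fin m)) M] : Type _ :=
  C^(⊤ : ℕ∞)⟮𝓡 m, M; 𝓘(ℝ, ℝ), ℝ⟯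

variable {m : ℕ} {M : Type*} [TopologicalSpace M] [T2Space M] [SecondCountableTopology M]
  [ChartedSpace (EuclideanSpace ℝ (Fin m)) M] [IsManifold (𝓡 m) (⊤ : ℕ∞) M]

/-- The ideal `𝔪ₓ` of smooth functions vanishing at the point `x`. -/
def mIdeal (x : M) : Ideal (SmoothFns m M) where
  carrier := {f | f x = 0}
  add_mem' := by intro f g hf hg; simp_all
  zero_mem' := by simp
  smul_mem' := by intro c f hf; simp_all

/-- The ideal `𝔫ₓ` of smooth functions vanishing on some neighbourhood of the point `x`. -/
def nIdeal (x : M) : Ideal (SmoothFns m M) where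
  carrier := {f | ∀ᶠ y in 𝓝 x, f y = 0}
  add_mem' := by
    intro f g hf hg
    filter_upwards [hf, hg] with y h1 h2
    simp [h1, h2]
  zero_mem' := by filter_upwards with y; simp
  smul_mem' := by
    intro c f hf
    filter_upwards [hf] with y h
    simp [h]

/-- The spectrum of an ideal: the set of common zeros of its elements. -/
def idealSpec (I : Ideal (SmoothFns m M)) : Set M :=
  {x : M | ∀ f ∈ I, f x = 0}

/-!
Since `R ⧸ I` is finite-dimensional, a smooth proper function `f` satisfies a polynomial relation
`p(f) ∈ I`, and `p(f)` has compact zero set. Adding squares of finitely many elements of `I` that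
do not vanish at the remaining zeros outside a neighbourhood `U` of `spec I` gives an element of
`I` whose zeros lie in `U`; it divides every smooth function vanishing on `U`. Hence `I` contains
every function vanishing near `spec I`, so `⨅ y ∈ spec I, 𝔫_y ≤ I`. The spectrum is finite, its
points giving distinct characters of `R ⧸ I`, and the ideals `𝔫_y` are pairwise coprime, so the
Chinese remainder theorem gives `R ⧸ I ≃ ∏ y ∈ spec I, R ⧸ (I + 𝔫_y)`.
-/

open Function
open scoped ContDiff

namespace Ideal

variable {R : Type*} [CommRing R]

theorem isCoprime_sup_sup (I : Ideal R) {A B : Ideal R} (h : IsCoprime A B) :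
    IsCoprime (I ⊔ A) (I ⊔ B) :=
  isCoprime_iff_codisjoint.2 (h.codisjoint.mono le_sup_right le_sup_right)

theorem sup_mul_sup_le_sup_mul (I A B : Ideal R) : (I ⊔ A) * (I ⊔ B) ≤ I ⊔ A * B := by
  rw [sup_mul, mul_sup, mul_sup]
  exact sup_le (le_sup_of_le_left (sup_le mul_le_left mul_le_left))
    (sup_le_sup_right mul_le_right _)

theorem prod_sup_le_sup_prod {ι : Type*} (I : Ideal R) (A : ι → Ideal R) (s : Finset ι) :
    ∏ i ∈ s, (I ⊔ A i) ≤ I ⊔ ∏ i ∈ s, A i := by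
  classical
  induction s using Finset.induction with
  | empty => simp
  | insert a s has ih =>
    rw [Finset.prod_insert has, Finset.prod_insert has]
    exact (mul_le_mul_right ih _).trans (sup_mul_sup_le_sup_mul I _ _)

theorem iInf_sup_eq_sup_iInf_of_pairwise_isCoprime {ι : Type*} [Finite ι] (I : Ideal R)
    {A : ι → Ideal R} (hA : Pairwise (IsCoprime on A)) :
    ⨅ i, (I ⊔ A i) = I ⊔ ⨅ i, A i := by
  have := Fintype.ofFinite ι
  refine le_antisymm ?_ (le_iInf fun i => sup_le_sup_left (iInf_le A i) I)
  calc ⨅ i, (I ⊔ A i) = ∏ i, (I ⊔ A i) := by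
        simpa using (prod_eq_iInf_of_pairwise_isCoprime (s := Finset.univ)
          fun i _ j _ hij => isCoprime_sup_sup I (hA hij)).symm
    _ ≤ I ⊔ ∏ i, A i := prod_sup_le_sup_prod I A _
    _ ≤ I ⊔ ⨅ i, A i :=
        sup_le_sup_left (by simpa using prod_le_inf (s := Finset.univ) (f := A)) I

end Ideal

section ChineseRemainder

variable {K R ι : Type*} [Field K] [CommRing R] [Algebra K R] [Fintype ι]

theorem finrank_quotient_iInf_eq_sum {J : ι → Ideal R} (hJ : Pairwise (IsCoprime on J))
    [FiniteDimensional K (R ⧸ ⨅ i, J i)] :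
    finrank K (R ⧸ ⨅ i, J i) = ∑ i, finrank K (R ⧸ J i) := by
  have hfin (i : ι) : FiniteDimensional K (R ⧸ J i) :=
    Module.Finite.of_surjective (Ideal.Quotient.factorₐ K (iInf_le J i)).toLinearMap
      (Ideal.Quotient.factor_surjective (iInf_le J i))
  let e : (R ⧸ ⨅ i, J i) ≃ₐ[K] ((i : ι) → R ⧸ J i) :=
    AlgEquiv.ofRingEquiv (f := Ideal.quotientInfRingEquivPiQuotient J hJ) fun _ => rfl
  rw [e.toLinearEquiv.finrank_eq, Module.finrank_pi_fintype]

theorem finrank_quotient_eq_sum_of_iInf_le {A : ι → Ideal R} (hA : Pairwise (IsCoprime on A))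
    (I : Ideal R) (hAI : ⨅ i, A i ≤ I) [FiniteDimensional K (R ⧸ I)] :
    finrank K (R ⧸ I) = ∑ i, finrank K (R ⧸ (I ⊔ A i)) := by
  have hI : ⨅ i, (I ⊔ A i) = I := by
    rw [Ideal.iInf_sup_eq_sup_iInf_of_pairwise_isCoprime I hA, sup_eq_left.2 hAI]
  let e := (Ideal.quotientEquivAlgOfEq K hI.symm).toLinearEquiv
  have : FiniteDimensional K (R ⧸ ⨅ i, (I ⊔ A i)) := Module.Finite.equiv e
  calc finrank K (R ⧸ I) = finrank K (R ⧸ ⨅ i, (I ⊔ A i)) := e.finrank_eq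
    _ = ∑ i, finrank K (R ⧸ (I ⊔ A i)) :=
        finrank_quotient_iInf_eq_sum fun _ _ hij => Ideal.isCoprime_sup_sup I (hA hij)

end ChineseRemainder

section SmoothFunctions

variable {E H N : Type*} [NormedAddCommGroup E] [NormedSpace ℝ E] [TopologicalSpace H]
  {I : ModelWithCorners ℝ E H} [TopologicalSpace N] [ChartedSpace H N] {n : ℕ∞}

def ContMDiffMap.evalAlgHom (x : N) : C^n⟮I, N; 𝓘(ℝ, ℝ), ℝ⟯ →ₐ[ℝ] ℝ :=
  (Pi.evalAlgHom ℝ (fun _ => ℝ) x).comp ContMDiffMap.coeFnAlgHom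

@[simp]
theorem ContMDiffMap.evalAlgHom_apply (x : N) (f : C^n⟮I, N; 𝓘(ℝ, ℝ), ℝ⟯) :
    ContMDiffMap.evalAlgHom x f = f x :=
  rfl

theorem ContMDiffMap.dvd_of_eventually_eq_zero {g h : C^n⟮I, N; 𝓘(ℝ, ℝ), ℝ⟯}
    (hg : ∀ᶠ x in 𝓝ˢ {x | h x = 0}, g x = 0) : h ∣ g := by
  have hquot : ContMDiff I 𝓘(ℝ, ℝ) n (fun x => g x / h x) := by
    intro x
    by_cases hx : h x = 0
    · refine (contMDiffAt_const (c := (0 : ℝ))).congr_of_eventuallyEq ?_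
      filter_upwards [hg.filter_mono (nhds_le_nhdsSet (s := {x | h x = 0}) hx)] with y hy
      simp [hy]
    · exact (g.contMDiff x).div₀ (h.contMDiff x) hx
  refine ⟨⟨_, hquot⟩, ContMDiffMap.ext fun x => ?_⟩
  change g x = h x * (g x / h x)
  by_cases hx : h x = 0
  · simp [hg.self_of_nhdsSet x hx, hx]
  · exact (mul_div_cancel₀ _ hx).symm

variable [FiniteDimensional ℝ E] [IsManifold I ∞ N] [T2Space N] [SecondCountableTopology N]

theorem exists_contMDiffMap_tendsto_cocompact_atTop :
    ∃ f : C^n⟮I, N; 𝓘(ℝ, ℝ), ℝ⟯, Tendsto f (cocompact N) atTop := by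
  have := Manifold.locallyCompact_of_finiteDimensional (M := N) I
  let K := CompactExhaustion.choice N
  -- `K.find x` is locally bounded, so a smooth function can stay above it
  have hloc (x : N) : ∃ c : ℝ, ∀ᶠ y in 𝓝 x, c ∈ Set.Ioi (K.find y : ℝ) := by
    refine ⟨K.find x + 2, ?_⟩
    filter_upwards [mem_interior_iff_mem_nhds.1 (K.subset_interior_succ _ (K.mem_find x))]
      with y hy
    have : (K.find y : ℝ) ≤ K.find x + 1 := by exact_mod_cast K.mem_iff_find_le.1 hy
    simp only [Set.mem_Ioi]
    linarith
  obtain ⟨f, hf⟩ := exists_contMDiffMap_forall_mem_convex_of_local_const I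
    (t := fun x => Set.Ioi (K.find x : ℝ)) (fun _ => convex_Ioi _) hloc
  refine ⟨f, tendsto_atTop.2 fun b => mem_cocompact.2 ⟨K ⌈b⌉₊, K.isCompact _, fun x hx => ?_⟩⟩
  have : ⌈b⌉₊ < K.find x := lt_of_not_ge fun h => hx (K.mem_iff_find_le.2 h)
  calc b ≤ ⌈b⌉₊ := Nat.le_ceil b
    _ ≤ K.find x := by exact_mod_cast this.le
    _ ≤ f x := (hf x).le

theorem exists_contMDiffMap_eventually_zero_eventually_one {y z : N} (hyz : y ≠ z) :
    ∃ f : C^n⟮I, N; 𝓘(ℝ, ℝ), ℝ⟯, (∀ᶠ x in 𝓝 y, f x = 0) ∧ ∀ᶠ x in 𝓝 z, f x = 1 := by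
  have := Manifold.locallyCompact_of_finiteDimensional (M := N) I
  obtain ⟨f, hy, hz, -⟩ := exists_contMDiffMap_zero_one_nhds_of_isClosed I (n := n)
    isClosed_singleton isClosed_singleton (Set.disjoint_singleton.2 hyz)
  exact ⟨f, nhdsSet_singleton (x := y) ▸ hy, nhdsSet_singleton (x := z) ▸ hz⟩

end SmoothFunctions

theorem exists_mem_isCompact_zeroSet (I : Ideal (SmoothFns m M))
    [FiniteDimensional ℝ (SmoothFns m M ⧸ I)] : ∃ P ∈ I, IsCompact {x | P x = 0} := by
  obtain ⟨f, hf⟩ := exists_contMDiffMap_tendsto_cocompact_atTop (I := 𝓡 m) (N := M) (n := ⊤)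
  let p := minpoly ℝ (Ideal.Quotient.mk I f)
  have hp : p ≠ 0 := minpoly.ne_zero (IsIntegral.of_finite ℝ _)
  have hpf (x : M) : Polynomial.aeval f p x = p.eval (f x) := by
    simpa using (Polynomial.aeval_algHom_apply (ContMDiffMap.evalAlgHom x) f p).symm
  refine ⟨Polynomial.aeval f p, ?_, ?_⟩
  · rw [← Ideal.Quotient.eq_zero_iff_mem, ← Ideal.Quotient.mkₐ_eq_mk ℝ,
      ← Polynomial.aeval_algHom_apply, Ideal.Quotient.mkₐ_eq_mk, minpoly.aeval]
  · obtain ⟨b, hb⟩ := (Polynomial.finite_setOfPred_isRoot hp).bddAbove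
    obtain ⟨K, hK, hKf⟩ := mem_cocompact.1 (hf.eventually_gt_atTop b)
    refine hK.of_isClosed_subset
      (isClosed_eq (Polynomial.aeval f p).contMDiff.continuous continuous_const) fun x hx => ?_
    by_contra hxK
    exact (hKf hxK).not_ge (hb ((hpf x).symm.trans hx))

omit [T2Space M] [SecondCountableTopology M] [IsManifold (𝓡 m) (⊤ : ℕ∞) M] in
theorem exists_mem_nonneg_pos_on (I : Ideal (SmoothFns m M)) {K : Set M} (hK : IsCompact K)
    (hKI : Disjoint K (idealSpec I)) : ∃ h ∈ I, (∀ x, 0 ≤ h x) ∧ ∀ x ∈ K, 0 < h x := by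
  refine hK.induction_on (p := fun s => ∃ h ∈ I, (∀ x, 0 ≤ h x) ∧ ∀ x ∈ s, 0 < h x)
    ⟨0, I.zero_mem, fun _ => le_rfl, by simp⟩ ?_ ?_ ?_
  · rintro s t hst ⟨h, hI, h0, hpos⟩
    exact ⟨h, hI, h0, fun x hx => hpos x (hst hx)⟩
  · rintro s t ⟨h, hI, h0, hs⟩ ⟨h', hI', h0', ht⟩
    refine ⟨h + h', I.add_mem hI hI', fun x => add_nonneg (h0 x) (h0' x), ?_⟩
    rintro x (hx | hx)
    · exact add_pos_of_pos_of_nonneg (hs x hx) (h0' x)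
    · exact add_pos_of_nonneg_of_pos (h0 x) (ht x hx)
  · intro x hx
    obtain ⟨g, hgI, hgx⟩ : ∃ g ∈ I, g x ≠ 0 := by
      simpa [idealSpec] using Set.disjoint_left.1 hKI hx
    refine ⟨{y | g y ≠ 0}, mem_nhdsWithin_of_mem_nhds
      ((isOpen_ne_fun g.contMDiff.continuous continuous_const).mem_nhds hgx), g * g,
      I.mul_mem_left g hgI, fun y => mul_self_nonneg (g y), fun y hy => mul_self_pos.2 hy⟩

theorem mem_of_eventually_eq_zero_nhdsSet_idealSpec (I : Ideal (SmoothFns m M))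
    [FiniteDimensional ℝ (SmoothFns m M ⧸ I)] {g : SmoothFns m M}
    (hg : ∀ᶠ x in 𝓝ˢ (idealSpec I), g x = 0) : g ∈ I := by
  obtain ⟨U, hUo, hsU, hgU⟩ := eventually_nhdsSet_iff_exists.1 hg
  obtain ⟨P, hPI, hPc⟩ := exists_mem_isCompact_zeroSet I
  obtain ⟨h, hhI, hh0, hhpos⟩ := exists_mem_nonneg_pos_on I (hPc.diff hUo)
    (Set.disjoint_left.2 fun x hx hxs => hx.2 (hsU hxs))
  have hne (x : M) (hx : x ∉ U) : (P * P + h) x ≠ 0 := by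
    change P x * P x + h x ≠ 0
    by_cases hPx : P x = 0
    · exact (add_pos_of_nonneg_of_pos (mul_self_nonneg _) (hhpos x ⟨hPx, hx⟩)).ne'
    · exact (add_pos_of_pos_of_nonneg (mul_self_pos.2 hPx) (hh0 x)).ne'
  -- `P * P + h ∈ I` has all its zeros in `U`, where `g` vanishes
  obtain ⟨q, rfl⟩ := ContMDiffMap.dvd_of_eventually_eq_zero (h := P * P + h) (g := g)
    (eventually_nhdsSet_iff_exists.2
      ⟨U, hUo, fun x hx => by_contra fun hxU => hne x hxU hx, hgU⟩)
  exact I.mul_mem_right q (I.add_mem (I.mul_mem_left P hPI) hhI)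

theorem idealSpec_finite (I : Ideal (SmoothFns m M))
    [FiniteDimensional ℝ (SmoothFns m M ⧸ I)] : (idealSpec I).Finite := by
  -- a finite-dimensional algebra has finitely many characters (`Finite.algHom`)
  let φ : idealSpec I → (SmoothFns m M ⧸ I →ₐ[ℝ] ℝ) := fun x =>
    Ideal.Quotient.liftₐ I (ContMDiffMap.evalAlgHom x.1) fun f hf => x.2 f hf
  refine Set.finite_coe_iff.1 (Finite.of_injective φ fun x y hxy => Subtype.ext ?_)
  by_contra hne
  obtain ⟨f, hx, hy⟩ := exists_contMDiffMap_eventually_zero_eventually_one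
    (I := 𝓡 m) (n := ⊤) hne
  have hfxy : f x = f y := congr($hxy (Ideal.Quotient.mk I f))
  rw [hx.self_of_nhds, hy.self_of_nhds] at hfxy
  exact zero_ne_one hfxy

theorem isCoprime_nIdeal {y z : M} (hyz : y ≠ z) :
    IsCoprime (nIdeal (m := m) y) (nIdeal z) := by
  obtain ⟨f, hy, hz⟩ := exists_contMDiffMap_eventually_zero_eventually_one
    (I := 𝓡 m) (n := ⊤) hyz
  refine Ideal.isCoprime_iff_exists.2 ⟨f, hy, 1 - f, ?_, add_sub_cancel f 1⟩
  change ∀ᶠ x in 𝓝 z, 1 - f x = 0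
  filter_upwards [hz] with x hx
  simp [hx]

theorem iInf_nIdeal_le (I : Ideal (SmoothFns m M))
    [FiniteDimensional ℝ (SmoothFns m M ⧸ I)] : ⨅ y : idealSpec I, nIdeal (y : M) ≤ I := fun _ hg =>
  mem_of_eventually_eq_zero_nhdsSet_idealSpec I
    (eventually_nhdsSet_iff_forall.2 fun y hy => Submodule.mem_iInf _ |>.1 hg ⟨y, hy⟩)

theorem finrank_quotient_eq_finsum_over_spec_general
    (I : Ideal (SmoothFns m M))
    (hfd : FiniteDimensional ℝ (SmoothFns m M ⧸ I)) :
    Module.finrank ℝ (SmoothFns m M ⧸ I) =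
      ∑ᶠ y ∈ idealSpec I, Module.finrank ℝ (SmoothFns m M ⧸ (I + nIdeal y)) := by
  have := (idealSpec_finite I).fintype
  rw [← finsum_set_coe_eq_finsum_mem, finsum_eq_sum_of_fintype]
  exact finrank_quotient_eq_sum_of_iInf_le
    (fun y z hyz => isCoprime_nIdeal (Subtype.coe_ne_coe.2 hyz)) I (iInf_nIdeal_le I)

/-- For a proper ideal `I` of `R = C^∞(M,ℝ)` of finite codimension,
`dim_ℝ(R/I) = Σ_{y ∈ spec I} dim_ℝ(R/(I + 𝔫_y))`, the sum ranging over the (finitely many)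
points of the spectrum of `I`. -/
theorem finrank_quotient_eq_finsum_over_spec
    (I : Ideal (SmoothFns m M)) (hI : I ≠ ⊤)
    (hfd : FiniteDimensional ℝ (SmoothFns m M ⧸ I)) :
    Module.finrank ℝ (SmoothFns m M ⧸ I) =
      ∑ᶠ y ∈ idealSpec I, Module.finrank ℝ (SmoothFns m M ⧸ (I + nIdeal y)) :=
  finrank_quotient_eq_finsum_over_spec_general I hfd
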